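/- arXiv:1005.2137 — 3 statements merged into one kernel-verified Lean document; each statement's English description precedes it below -/
import Mathlib

section
/- Let $n \ge 1$ and let $X_1,\dots,X_n$ be real numbers with mean $\bar{X}_n = n^{-1}\sum_{t=1}^n X_t$. Define the partial sums $S_t = \sum_{j=1}^{t}(X_j - \bar{X}_n)$ for $1 \le t \le n$ and the sample autocovariances $\hat{\gamma}_n(j) = n^{-1}\sum_{t=1}^{n-|j|}(X_t-\bar{X}_n)(X_{t+|j|}-\bar{X}_n)$ for $|j| \le n-1$. Then $2 n^{-2}\sum_{t=1}^{n} S_t^2 = \sum_{j=-(n-1)}^{n-1}\big(1 - |j|/n\big)\,\hat{\gamma}_n(j)$; that is, twice the self-normalizer $W_n = n^{-2}\sum_{t=1}^n S_t^2$ equals the Bartlett lag-window long-run variance estimate with bandwidth equal to the sample size ($b=1$). -/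
/-!
With `Y t = X t - X̄`, expanding the squares gives
`∑ₜ Sₜ² = ∑_{a,b} (n + 1 - max a b) Y_a Y_b`, and regrouping the lag-window sum by the pairs
`(a, b) = (t, t + |j|)` gives `n² · (Bartlett sum) = ∑_{a,b} (n - |b - a|) Y_a Y_b`.
The two kernels differ by `n - |b - a| - 2 (n + 1 - max a b) = (a - n - 2) + b`, a sum of a
function of `a` and a function of `b`; its quadratic form vanishes because `∑ Y = 0`.
-/

open Finset

variable {R : Type*}

section CommSemiring

variable [CommSemiring R]

theorem sq_sum_Icc_eq_sum_sum_ite {n t : ℕ} (ht : t ≤ n) (Y : ℕ → R) :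
    (∑ a ∈ Icc 1 t, Y a) ^ 2
      = ∑ a ∈ Icc 1 n, ∑ b ∈ Icc 1 n, if max a b ≤ t then Y a * Y b else 0 := by
  have hIcc : Icc 1 t = (Icc 1 n).filter (· ≤ t) := by
    ext a; simp only [mem_Icc, mem_filter]; omega
  simp only [sq, sum_mul_sum, hIcc, sum_filter, ite_zero_mul_ite_zero, max_le_iff]

theorem sum_sq_sum_Icc_eq_sum_sum (n : ℕ) (Y : ℕ → R) :
    ∑ t ∈ Icc 1 n, (∑ a ∈ Icc 1 t, Y a) ^ 2
      = ∑ a ∈ Icc 1 n, ∑ b ∈ Icc 1 n, ((n + 1 - max a b : ℕ) : R) * (Y a * Y b) := by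
  rw [sum_congr rfl fun t ht => sq_sum_Icc_eq_sum_sum_ite (mem_Icc.1 ht).2 Y, sum_comm]
  refine sum_congr rfl fun a ha => ?_
  rw [sum_comm]
  refine sum_congr rfl fun b hb => ?_
  have hfilter : (Icc 1 n).filter (max a b ≤ ·) = Icc (max a b) n := by
    ext t; simp only [mem_Icc, mem_filter] at ha hb ⊢; omega
  rw [← sum_filter, hfilter, sum_const, Nat.card_Icc, nsmul_eq_mul]

theorem sum_lag_mul_sum_eq_sum_sum (n : ℕ) (w : ℤ → R) (Y : ℕ → R) :
    ∑ j ∈ Icc (-(n : ℤ) + 1) (n - 1), w j * ∑ t ∈ Icc 1 (n - j.natAbs), Y t * Y (t + j.natAbs)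
      = ∑ a ∈ Icc 1 n, ∑ b ∈ Icc 1 n, w (b - a) * (Y a * Y b) := by
  simp only [mul_sum]
  rw [sum_sigma', ← sum_product']
  -- `(j, t)` goes to the pair `{t, t + |j|}`, ordered so that `b - a = j`
  refine sum_nbij' (fun p => (p.2 + (-p.1).toNat, p.2 + p.1.toNat))
    (fun q => ⟨q.2 - q.1, min q.1 q.2⟩) ?_ ?_ ?_ ?_ ?_
  · rintro ⟨j, t⟩ h
    simp only [mem_sigma, mem_product, mem_Icc] at h ⊢
    omega
  · rintro ⟨a, b⟩ h
    simp only [mem_sigma, mem_product, mem_Icc] at h ⊢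
    omega
  · rintro ⟨j, t⟩ -
    simp only [Sigma.mk.injEq, heq_eq_eq]
    omega
  · rintro ⟨a, b⟩ -
    simp only [Prod.mk.injEq]
    omega
  · rintro ⟨j, t⟩ -
    dsimp only
    rw [show ((t + j.toNat : ℕ) : ℤ) - (t + (-j).toNat : ℕ) = j by omega]
    rcases le_total 0 j with h | h
    · rw [show (-j).toNat = 0 by omega, show j.toNat = j.natAbs by omega, add_zero]
    · rw [show j.toNat = 0 by omega, show (-j).toNat = j.natAbs by omega, add_zero,
        mul_comm (Y _)]

theorem sum_sum_add_mul_mul_eq_zero {ι : Type*} (s : Finset ι) (u v : ι → R) {Y : ι → R}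
    (hY : ∑ i ∈ s, Y i = 0) : ∑ a ∈ s, ∑ b ∈ s, (u a + v b) * (Y a * Y b) = 0 := by
  have hsplit : ∀ a b, (u a + v b) * (Y a * Y b) = u a * Y a * Y b + Y a * (v b * Y b) :=
    fun a b => by ring
  simp only [hsplit, sum_add_distrib, ← mul_sum, ← sum_mul, hY, mul_zero, zero_mul,
    sum_const_zero, add_zero]

end CommSemiring

theorem sum_sum_sub_abs_mul_eq_two_mul [CommRing R] {n : ℕ} {Y : ℕ → R}
    (hY : ∑ a ∈ Icc 1 n, Y a = 0) :
    ∑ a ∈ Icc 1 n, ∑ b ∈ Icc 1 n, ((n - |(b : ℤ) - a| : ℤ) : R) * (Y a * Y b)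
      = 2 * ∑ a ∈ Icc 1 n, ∑ b ∈ Icc 1 n, ((n + 1 - max a b : ℕ) : R) * (Y a * Y b) := by
  have hcoef : ∀ a ∈ Icc 1 n, ∀ b ∈ Icc 1 n, ((n - |(b : ℤ) - a| : ℤ) : R)
      = 2 * ((n + 1 - max a b : ℕ) : R) + (((a - n - 2 : ℤ) : R) + ((b : ℤ) : R)) := by
    intro a ha b hb
    rw [mem_Icc] at ha hb
    have h : (n - |(b : ℤ) - a| : ℤ)
        = 2 * ((n + 1 - max a b : ℕ) : ℤ) + ((a - n - 2 : ℤ) + b) := by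
      rw [abs_eq_max_neg]; omega
    rw [h]; push_cast; ring
  calc _ = ∑ a ∈ Icc 1 n, ∑ b ∈ Icc 1 n, (2 * (((n + 1 - max a b : ℕ) : R) * (Y a * Y b))
          + (((a - n - 2 : ℤ) : R) + ((b : ℤ) : R)) * (Y a * Y b)) := by
        refine sum_congr rfl fun a ha => sum_congr rfl fun b hb => ?_
        rw [hcoef a ha b hb]; ring
    _ = _ := by
        simp only [sum_add_distrib, ← mul_sum]
        rw [sum_sum_add_mul_mul_eq_zero _ _ _ hY, add_zero]

theorem sum_sub_sum_div_card_eq_zero {ι K : Type*} [Field K] [CharZero K] (s : Finset ι)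
    (X : ι → K) : ∑ i ∈ s, (X i - (∑ i ∈ s, X i) / #s) = 0 := by
  rw [sum_sub_distrib, sum_const, nsmul_eq_mul, ← expect_eq_sum_div_card, card_mul_expect,
    sub_self]

/-- Twice the self-normalizer `Wₙ = n⁻² ∑ₜ Sₜ²` built from the centered
partial sums equals the Bartlett lag-window long-run variance estimate with
bandwidth equal to the sample size (`b = 1`). -/
theorem two_selfnormalizer_eq_bartlett
    (n : ℕ) (hn : 1 ≤ n) (X : ℕ → ℝ) :
    let Xbar : ℝ := (∑ t ∈ Finset.Icc 1 n, X t) / n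
    let S : ℕ → ℝ := fun t => ∑ j ∈ Finset.Icc 1 t, (X j - Xbar)
    let γhat : ℤ → ℝ := fun j =>
      (∑ t ∈ Finset.Icc 1 (n - j.natAbs), (X t - Xbar) * (X (t + j.natAbs) - Xbar)) / n
    2 * ((n : ℝ) ^ 2)⁻¹ * ∑ t ∈ Finset.Icc 1 n, S t ^ 2
      = ∑ j ∈ Finset.Icc (-(n : ℤ) + 1) ((n : ℤ) - 1),
          (1 - |(j : ℝ)| / n) * γhat j := by
  intro Xbar S γhat
  set Y : ℕ → ℝ := fun t => X t - Xbar
  have hY : ∑ t ∈ Icc 1 n, Y t = 0 := by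
    have h := sum_sub_sum_div_card_eq_zero (Icc 1 n) X
    rwa [Nat.card_Icc, Nat.add_sub_cancel] at h
  have hn0 : (n : ℝ) ≠ 0 := Nat.cast_ne_zero.2 (Nat.one_le_iff_ne_zero.1 hn)
  have hγ : ∀ j : ℤ, (1 - |(j : ℝ)| / n) * γhat j = ((n : ℝ) ^ 2)⁻¹ *
      (((n - |j| : ℤ) : ℝ) * ∑ t ∈ Icc 1 (n - j.natAbs), Y t * Y (t + j.natAbs)) := by
    intro j
    simp only [γhat]
    push_cast
    field_simp
    rfl
  calc 2 * ((n : ℝ) ^ 2)⁻¹ * ∑ t ∈ Icc 1 n, S t ^ 2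
      = ((n : ℝ) ^ 2)⁻¹ *
          (2 * ∑ a ∈ Icc 1 n, ∑ b ∈ Icc 1 n, ((n + 1 - max a b : ℕ) : ℝ) * (Y a * Y b)) := by
        rw [← sum_sq_sum_Icc_eq_sum_sum]; ring
    _ = ((n : ℝ) ^ 2)⁻¹ * ∑ j ∈ Icc (-(n : ℤ) + 1) (n - 1),
          ((n - |j| : ℤ) : ℝ) * ∑ t ∈ Icc 1 (n - j.natAbs), Y t * Y (t + j.natAbs) := by
        rw [← sum_sum_sub_abs_mul_eq_two_mul hY, sum_lag_mul_sum_eq_sum_sum]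
    _ = _ := by
        rw [mul_sum]
        exact sum_congr rfl fun j _ => (hγ j).symm
end

section
/- Let $(g_k)_{k\ge 1}$ be real numbers with $\sum_{k=1}^{\infty} g_k^2 < \infty$, and for an integer $k \ge 1$ define $H_k(w) = \sum_{t=1}^{k} e^{itw}$. Then for all integers $1 \le B \le r$, $\int_{-\pi}^{\pi}\int_{-\pi}^{\pi}\Big|\sum_{k=B}^{r} g_k\, e^{ik\lambda}\, H_k(w)\Big|^2\, dw\, d\lambda \;\le\; 16\pi^2\, r \sum_{k=B}^{\infty} g_k^2.$ -/
/-!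
Instead of summing by parts, exchange the two sums: the integrand is `‖∑_{t=1}^r c_t(λ) e^{itw}‖²`
with `c_t(λ) = ∑_{k=max(B,t)}^r g_k e^{ikλ}`. Parseval for trigonometric polynomials in `w` and
then in `λ` turns the double integral into `4π² ∑_{t=1}^r ∑_{k=max(B,t)}^r g_k²`, and each inner
sum is at most `∑_{k=B}^r g_k²`.
-/

open Complex Finset ComplexConjugate
open scoped Real

theorem integral_exp_int_mul_I (n : ℤ) :
    ∫ x in (-π)..π, exp (n * x * I) = if n = 0 then (2 * π : ℂ) else 0 := by
  split_ifs with hn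
  · simp [hn]; ring
  · have hc : (n : ℂ) * I ≠ 0 := by simp [hn]
    have hperiod : exp (n * I * π) = exp (n * I * (-π : ℝ)) := by
      rw [show (n : ℂ) * I * π = n * I * (-π : ℝ) + n * (2 * π * I) by push_cast; ring,
        exp_add, exp_int_mul_two_pi_mul_I, mul_one]
    simp only [mul_right_comm _ _ I]
    rw [integral_exp_mul_complex hc, hperiod, sub_self, zero_div]

theorem integral_exp_mul_conj_exp (m n : ℤ) :
    ∫ x in (-π)..π, exp (m * x * I) * conj (exp (n * x * I)) =
      if m = n then (2 * π : ℂ) else 0 := by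
  have hcombine : ∀ x : ℝ, exp (m * x * I) * conj (exp (n * x * I)) =
      exp ((m - n : ℤ) * x * I) := fun x => by
    rw [← exp_conj, ← exp_add]
    simp only [map_mul, conj_ofReal, conj_I, map_intCast]
    push_cast; ring_nf
  simp_rw [hcombine, integral_exp_int_mul_I, sub_eq_zero]

theorem integral_norm_sq_sum_exp {ι : Type*} (s : Finset ι) (c : ι → ℂ) {ν : ι → ℤ}
    (hν : Set.InjOn ν s) :
    ∫ x in (-π)..π, ‖∑ i ∈ s, c i * exp (ν i * x * I)‖ ^ 2 = 2 * π * ∑ i ∈ s, ‖c i‖ ^ 2 := by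
  apply ofReal_injective
  have hexpand : ∀ x : ℝ, ((‖∑ i ∈ s, c i * exp (ν i * x * I)‖ ^ 2 : ℝ) : ℂ) =
      ∑ i ∈ s, ∑ j ∈ s, c i * conj (c j) * (exp (ν i * x * I) * conj (exp (ν j * x * I))) :=
    fun x => by
      rw [ofReal_pow, ← mul_conj', map_sum, sum_mul_sum]
      simp only [map_mul, mul_mul_mul_comm]
  have hrow : ∀ i ∈ s, ∫ x in (-π)..π,
      ∑ j ∈ s, c i * conj (c j) * (exp (ν i * x * I) * conj (exp (ν j * x * I))) =
        2 * π * (‖c i‖ ^ 2 : ℝ) := fun i hi => by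
    rw [intervalIntegral.integral_finsetSum fun j _ => by
      apply Continuous.intervalIntegrable; fun_prop]
    simp_rw [intervalIntegral.integral_const_mul, integral_exp_mul_conj_exp]
    rw [sum_eq_single i (fun j hj hji => by rw [if_neg (hν.ne hi hj hji.symm), mul_zero])
      (absurd hi), if_pos rfl, mul_conj']
    push_cast; ring
  rw [← intervalIntegral.integral_ofReal]
  simp_rw [hexpand]
  rw [intervalIntegral.integral_finsetSum fun i _ => by
    apply Continuous.intervalIntegrable; fun_prop, sum_congr rfl hrow]
  push_cast
  rw [mul_sum]

theorem sum_Icc_mul_sum_Icc_one_eq {R : Type*} [CommSemiring R] (a b : ℕ → R) (B r : ℕ) :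
    ∑ k ∈ Icc B r, a k * ∑ t ∈ Icc 1 k, b t =
      ∑ t ∈ Icc 1 r, (∑ k ∈ Icc (max B t) r, a k) * b t := by
  simp_rw [mul_sum, sum_mul]
  exact sum_comm' fun k t => by simp only [mem_Icc, max_le_iff]; omega

theorem sum_Icc_le_tsum_add {f : ℕ → ℝ} (hf : Summable f) (hf0 : ∀ k, 0 ≤ f k) (B r : ℕ) :
    ∑ k ∈ Icc B r, f k ≤ ∑' k, f (B + k) := by
  rw [← Ico_add_one_right_eq_Icc, sum_Ico_eq_sum_range]
  refine Summable.sum_le_tsum _ (fun k _ => hf0 _) ?_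
  simpa only [add_comm B] using (summable_nat_add_iff B).mpr hf

theorem double_integral_summation_by_parts_bound_general
    (g : ℕ → ℝ) (hg : Summable fun k => g k ^ 2)
    (B r : ℕ) :
    (∫ lam in (-Real.pi)..Real.pi, ∫ w in (-Real.pi)..Real.pi,
        (‖(∑ k ∈ Finset.Icc B r,
          ((g k : ℝ) : ℂ) * Complex.exp ((((k : ℝ) * lam : ℝ) : ℂ) * Complex.I)
            * ∑ t ∈ Finset.Icc 1 k,
                Complex.exp ((((t : ℝ) * w : ℝ) : ℂ) * Complex.I))‖) ^ 2)
      ≤ 16 * Real.pi ^ 2 * r * ∑' k : ℕ, g (B + k) ^ 2 := by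
  set coeff : ℝ → ℕ → ℂ := fun lam t =>
    ∑ k ∈ Icc (max B t) r, (g k : ℂ) * exp ((k : ℤ) * lam * I)
  have hinner : ∀ lam, ∫ w in (-π)..π, ‖∑ k ∈ Icc B r,
      (g k : ℂ) * exp (((k * lam : ℝ) : ℂ) * I) * ∑ t ∈ Icc 1 k, exp (((t * w : ℝ) : ℂ) * I)‖ ^ 2
      = 2 * π * ∑ t ∈ Icc 1 r, ‖coeff lam t‖ ^ 2 := fun lam => by
    rw [← integral_norm_sq_sum_exp _ (coeff lam) Nat.cast_injective.injOn]
    congr! 3 with w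
    rw [sum_Icc_mul_sum_Icc_one_eq]
    push_cast
    rfl
  have houter : ∀ t, ∫ lam in (-π)..π, ‖coeff lam t‖ ^ 2 =
      2 * π * ∑ k ∈ Icc (max B t) r, g k ^ 2 := fun t => by
    simpa only [norm_real, Real.norm_eq_abs, sq_abs] using
      integral_norm_sq_sum_exp (Icc (max B t) r) (fun k => (g k : ℂ)) Nat.cast_injective.injOn
  simp_rw [hinner]
  rw [intervalIntegral.integral_const_mul, intervalIntegral.integral_finsetSum fun t _ => by
    apply Continuous.intervalIntegrable; fun_prop]
  simp_rw [houter]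
  calc 2 * π * ∑ t ∈ Icc 1 r, 2 * π * ∑ k ∈ Icc (max B t) r, g k ^ 2
      ≤ 2 * π * ∑ t ∈ Icc 1 r, 2 * π * ∑ k ∈ Icc B r, g k ^ 2 := by
        gcongr with t; exact le_max_left B t
    _ = 4 * π ^ 2 * r * ∑ k ∈ Icc B r, g k ^ 2 := by
        rw [sum_const, Nat.card_Icc, nsmul_eq_mul]; push_cast; ring
    _ ≤ 16 * π ^ 2 * r * ∑' k, g (B + k) ^ 2 := by
        gcongr ?_ * _ * _ * ?_
        · norm_num
        · exact sum_Icc_le_tsum_add hg (fun k => sq_nonneg (g k)) B r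

/-- with `H_k(w) = ∑_{t=1}^k e^{itw}`, for square-summable `(g_k)` and
`1 ≤ B ≤ r`,
`∫_{-π}^{π} ∫_{-π}^{π} |∑_{k=B}^{r} g_k e^{ikλ} H_k(w)|² dw dλ ≤ 16 π² r ∑_{k=B}^∞ g_k²`. -/
theorem double_integral_summation_by_parts_bound
    (g : ℕ → ℝ) (hg : Summable fun k => g k ^ 2)
    (B r : ℕ) (hB : 1 ≤ B) (hBr : B ≤ r) :
    (∫ lam in (-Real.pi)..Real.pi, ∫ w in (-Real.pi)..Real.pi,
        (‖(∑ k ∈ Finset.Icc B r,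
          ((g k : ℝ) : ℂ) * Complex.exp ((((k : ℝ) * lam : ℝ) : ℂ) * Complex.I)
            * ∑ t ∈ Finset.Icc 1 k,
                Complex.exp ((((t : ℝ) * w : ℝ) : ℂ) * Complex.I))‖) ^ 2)
      ≤ 16 * Real.pi ^ 2 * r * ∑' k : ℕ, g (B + k) ^ 2 :=
  double_integral_summation_by_parts_bound_general g hg B r
end

section
/- Let $f : \mathbb{R} \to \mathbb{R}$ be measurable, $2\pi$-periodic and even, with $|f(\lambda)| \le M$ for all $\lambda$, and define $\gamma(h) = \int_{-\pi}^{\pi}\cos(h\lambda) f(\lambda)\, d\lambda$ for $h \in \mathbb{Z}$. There exists an absolute constant $C$ (one may take $C = 16\pi^2$) such that for all real sequences $(g_k)_{k\ge 1}$ with $\sum_{k=1}^{\infty} g_k^2 < \infty$ and all integers $1 \le B \le r$, $\Big|\sum_{k=B}^{r}\sum_{k'=B}^{r}\sum_{t=1}^{k}\sum_{t'=1}^{k'} g_k\, g_{k'}\, \gamma(t-t')\,\gamma(t'-k'-t+k)\Big| \;\le\; C\, M^2\, r \sum_{k=B}^{\infty} g_k^2.$ -/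
/-!
Since `f` is even, `γ(h) = ∫_{-π}^{π} e^{ihλ} f(λ) dλ`, and the sum becomes
`∫∫ f(λ) f(μ) |S(λ, μ)|² dμ dλ` with
`S(λ, μ) = ∑_{B ≤ k ≤ r} ∑_{1 ≤ t ≤ k} g_k e^{i(tλ + (k - t)μ)}`.
Bounding `f` by `M` twice leaves `M² ∫∫ |S|²`, and as the frequencies `(t, k - t)` are pairwise
distinct, Parseval gives `∫∫ |S|² = 4π² ∑_k k g_k² ≤ 4π² r ∑_{k ≥ B} g_k²`.
-/

open MeasureTheory Finset Complex
open scoped Real ComplexConjugate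

noncomputable def expMulI (n : ℤ) (x : ℝ) : ℂ := cexp (n * x * I)

@[fun_prop]
theorem continuous_expMulI (n : ℤ) : Continuous (expMulI n) := by
  unfold expMulI; fun_prop

theorem expMulI_mul_conj (m n : ℤ) (x : ℝ) :
    expMulI m x * conj (expMulI n x) = expMulI (m - n) x := by
  simp only [expMulI, ← exp_conj, ← exp_add, map_mul, conj_ofReal, conj_I, map_intCast]
  push_cast
  ring_nf

theorem expMulI_eq_cos_add_sin_mul_I (n : ℤ) (x : ℝ) :
    expMulI n x = Real.cos (n * x) + Real.sin (n * x) * I := by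
  simpa [expMulI] using exp_mul_I (n * x)

theorem integral_expMulI (n : ℤ) :
    ∫ x in -π..π, expMulI n x = if n = 0 then 2 * π else 0 := by
  split_ifs with hn
  · simp [hn, expMulI, two_mul]
  have hc : (n : ℂ) * I ≠ 0 := by simp [hn]
  simp only [expMulI, mul_right_comm _ _ I]
  rw [integral_exp_mul_complex hc]
  have : cexp (n * I * π) = cexp (n * I * (-π : ℝ)) := by
    rw [show (n : ℂ) * I * π = n * I * (-π : ℝ) + n * (2 * π * I) by push_cast; ring,
      exp_add, exp_int_mul_two_pi_mul_I, mul_one]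
  rw [this, sub_self, zero_div, ofReal_zero]

noncomputable def autocov (φ : ℝ → ℂ) (n : ℤ) : ℂ := ∫ x in -π..π, expMulI n x * φ x

theorem autocov_one (n : ℤ) : autocov 1 n = if n = 0 then 2 * π else 0 := by
  simpa [autocov] using integral_expMulI n

theorem autocov_ofReal_eq_integral_cos {f : ℝ → ℝ}
    (hf : IntervalIntegrable (fun x => (f x : ℂ)) volume (-π) π)
    (heven : ∀ x, f (-x) = f x) (n : ℤ) :
    autocov (fun x => f x) n = ↑(∫ x in -π..π, Real.cos (n * x) * f x) := by
  have hsin : ∫ x in -π..π, Real.sin (n * x) * f x = 0 := by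
    have h := intervalIntegral.integral_comp_neg (a := -π) (b := π)
      (fun x => Real.sin (n * x) * f x)
    simp only [neg_neg, mul_neg, Real.sin_neg, heven, neg_mul,
      intervalIntegral.integral_neg] at h
    linarith
  simp only [autocov, expMulI_eq_cos_add_sin_mul_I, add_mul, mul_right_comm _ I]
  rw [intervalIntegral.integral_add (hf.continuousOn_mul (by fun_prop))
    ((hf.continuousOn_mul (by fun_prop)).mul_const I), intervalIntegral.integral_mul_const]
  simp only [← ofReal_mul, intervalIntegral.integral_ofReal, hsin, ofReal_zero, zero_mul, add_zero]

section TrigPoly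

variable {ι : Type*} (s : Finset ι) (c : ι → ℂ) (n : ι → ℤ)

noncomputable def trigPoly (x : ℝ) : ℂ := ∑ i ∈ s, c i * expMulI (n i) x

theorem integral_mul_trigPoly {φ : ℝ → ℂ} (hφ : IntervalIntegrable φ volume (-π) π) :
    ∫ x in -π..π, φ x * trigPoly s c n x = ∑ i ∈ s, c i * autocov φ (n i) := by
  simp only [trigPoly, autocov, ← intervalIntegral.integral_const_mul, Finset.sum_mul,
    ← mul_assoc, mul_comm (φ _)]
  exact intervalIntegral.integral_finsetSum fun i _ => hφ.continuousOn_mul (by fun_prop)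

theorem normSq_trigPoly (x : ℝ) :
    ((‖trigPoly s c n x‖ ^ 2 : ℝ) : ℂ) =
      trigPoly (s ×ˢ s) (fun p => c p.1 * conj (c p.2)) (fun p => n p.1 - n p.2) x := by
  rw [ofReal_pow, ← mul_conj', trigPoly, trigPoly, map_sum, Finset.sum_mul_sum,
    Finset.sum_product]
  refine Finset.sum_congr rfl fun i _ => Finset.sum_congr rfl fun j _ => ?_
  rw [map_mul, ← expMulI_mul_conj]
  ring

theorem integral_mul_normSq_trigPoly {φ : ℝ → ℂ} (hφ : IntervalIntegrable φ volume (-π) π) :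
    ∫ x in -π..π, φ x * ((‖trigPoly s c n x‖ ^ 2 : ℝ) : ℂ) =
      ∑ p ∈ s ×ˢ s, c p.1 * conj (c p.2) * autocov φ (n p.1 - n p.2) := by
  simp only [normSq_trigPoly]
  exact integral_mul_trigPoly _ _ _ hφ

end TrigPoly

theorem norm_integral_mul_ofReal_le {a b M : ℝ} (hab : a ≤ b) {φ : ℝ → ℂ} {u : ℝ → ℝ}
    (hφ : ∀ x, ‖φ x‖ ≤ M) (hu₀ : ∀ x, 0 ≤ u x) (hu : IntervalIntegrable u volume a b) :
    ‖∫ x in a..b, φ x * u x‖ ≤ M * ∫ x in a..b, u x := by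
  rw [← intervalIntegral.integral_const_mul]
  refine intervalIntegral.norm_integral_le_of_norm_le hab (ae_of_all _ fun x _ => ?_)
    (hu.const_mul M)
  rw [norm_mul, norm_real, Real.norm_of_nonneg (hu₀ x)]
  exact mul_le_mul_of_nonneg_right (hφ x) (hu₀ x)

section TwoVariables

variable {ι : Type*} (s : Finset ι) (a : ι → ℂ) (n m : ι → ℤ)

noncomputable def trigPoly₂ (x y : ℝ) : ℂ := trigPoly s (fun i => a i * expMulI (n i) x) m y

noncomputable def autocovProdForm (φ ψ : ℝ → ℂ) : ℂ :=
  ∑ p ∈ s ×ˢ s, a p.1 * conj (a p.2) * autocov φ (n p.1 - n p.2) * autocov ψ (m p.1 - m p.2)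

theorem continuous_trigPoly₂ : Continuous (Function.uncurry (trigPoly₂ s a n m)) := by
  unfold trigPoly₂ trigPoly
  fun_prop

theorem integral_mul_normSq_trigPoly₂ {ψ : ℝ → ℂ} (hψ : IntervalIntegrable ψ volume (-π) π)
    (x : ℝ) :
    ∫ y in -π..π, ψ y * ((‖trigPoly₂ s a n m x y‖ ^ 2 : ℝ) : ℂ) =
      trigPoly (s ×ˢ s) (fun p => a p.1 * conj (a p.2) * autocov ψ (m p.1 - m p.2))
        (fun p => n p.1 - n p.2) x := by
  simp only [trigPoly₂]
  rw [integral_mul_normSq_trigPoly _ _ _ hψ, trigPoly]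
  refine sum_congr rfl fun p _ => ?_
  rw [map_mul, ← expMulI_mul_conj]
  ring

theorem autocovProdForm_eq_integral {φ ψ : ℝ → ℂ} (hφ : IntervalIntegrable φ volume (-π) π)
    (hψ : IntervalIntegrable ψ volume (-π) π) :
    autocovProdForm s a n m φ ψ =
      ∫ x in -π..π, φ x * ∫ y in -π..π, ψ y * ((‖trigPoly₂ s a n m x y‖ ^ 2 : ℝ) : ℂ) := by
  simp only [integral_mul_normSq_trigPoly₂ _ _ _ _ hψ, integral_mul_trigPoly _ _ _ hφ,
    autocovProdForm]
  exact sum_congr rfl fun p _ => by ring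

theorem autocovProdForm_one_one (hinj : Set.InjOn (fun i => (n i, m i)) s) :
    autocovProdForm s a n m 1 1 = (2 * π) ^ 2 * ∑ i ∈ s, ‖a i‖ ^ 2 := by
  rw [autocovProdForm, sum_product, ofReal_sum, mul_sum]
  refine sum_congr rfl fun i hi => ?_
  rw [sum_eq_single_of_mem i hi]
  · simp only [sub_self, autocov_one, if_true, mul_conj']
    push_cast
    ring
  · intro j hj hji
    have hne : n i - n j ≠ 0 ∨ m i - m j ≠ 0 := by
      by_contra! h
      exact hji (hinj hj hi (Prod.ext (by simp; omega) (by simp; omega)))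
    rcases hne with h | h <;> simp [autocov_one, h]

theorem norm_autocovProdForm_le {φ ψ : ℝ → ℂ} {M N : ℝ}
    (hφ : IntervalIntegrable φ volume (-π) π) (hψ : IntervalIntegrable ψ volume (-π) π)
    (hφM : ∀ x, ‖φ x‖ ≤ M) (hψN : ∀ x, ‖ψ x‖ ≤ N) (hinj : Set.InjOn (fun i => (n i, m i)) s) :
    ‖autocovProdForm s a n m φ ψ‖ ≤ M * N * ((2 * π) ^ 2 * ∑ i ∈ s, ‖a i‖ ^ 2) := by
  set G : ℝ → ℝ := fun x => ∫ y in -π..π, ‖trigPoly₂ s a n m x y‖ ^ 2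
  have hG : Continuous G :=
    intervalIntegral.continuous_parametric_intervalIntegral_of_continuous'
      (by have := continuous_trigPoly₂ s a n m; fun_prop) _ _
  have hGint : ∫ x in -π..π, G x = (2 * π) ^ 2 * ∑ i ∈ s, ‖a i‖ ^ 2 := by
    apply ofReal_injective
    have h1 : IntervalIntegrable (1 : ℝ → ℂ) volume (-π) π := intervalIntegrable_const
    rw [← intervalIntegral.integral_ofReal]
    simpa [G, ← intervalIntegral.integral_ofReal] using
      (autocovProdForm_eq_integral s a n m h1 h1).symm.trans
        (autocovProdForm_one_one s a n m hinj)
  have hinner : ∀ x, ‖∫ y in -π..π, ψ y * ((‖trigPoly₂ s a n m x y‖ ^ 2 : ℝ) : ℂ)‖ ≤ N * G x :=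
    fun x => norm_integral_mul_ofReal_le (by linarith [Real.pi_pos]) hψN (fun y => by positivity)
      (Continuous.intervalIntegrable (by have := continuous_trigPoly₂ s a n m; fun_prop) _ _)
  have hM : 0 ≤ M := (norm_nonneg _).trans (hφM 0)
  rw [autocovProdForm_eq_integral s a n m hφ hψ, ← hGint, ← intervalIntegral.integral_const_mul]
  refine intervalIntegral.norm_integral_le_of_norm_le (by linarith [Real.pi_pos])
    (ae_of_all _ fun x _ => ?_)
    ((hG.const_mul _).intervalIntegrable _ _)
  rw [norm_mul, mul_assoc]
  exact mul_le_mul (hφM x) (hinner x) (norm_nonneg _) hM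

end TwoVariables

theorem autocovProdForm_sigma_Icc (g : ℕ → ℝ) (B r : ℕ) (ψ : ℝ → ℂ) :
    autocovProdForm ((Icc B r).sigma fun k => Icc 1 k) (fun p => (g p.1 : ℂ))
        (fun p => (p.2 : ℤ)) (fun p => (p.1 : ℤ) - p.2) ψ ψ =
      ∑ k ∈ Icc B r, ∑ k' ∈ Icc B r, ∑ t ∈ Icc 1 k, ∑ t' ∈ Icc 1 k',
        g k * g k' * autocov ψ ((t : ℤ) - t') * autocov ψ ((t' : ℤ) - k' - t + k) := by
  simp only [autocovProdForm, sum_product, sum_sigma, conj_ofReal]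
  refine sum_congr rfl fun k _ => ?_
  rw [sum_comm]
  refine sum_congr rfl fun k' _ => sum_congr rfl fun t _ => sum_congr rfl fun t' _ => ?_
  ring_nf

theorem sum_Icc_mul_sq_le_mul_tsum {g : ℕ → ℝ} (hg : Summable fun k => g k ^ 2) (B r : ℕ) :
    ∑ k ∈ Icc B r, (k : ℝ) * g k ^ 2 ≤ r * ∑' j, g (B + j) ^ 2 := by
  calc ∑ k ∈ Icc B r, (k : ℝ) * g k ^ 2 ≤ ∑ k ∈ Icc B r, (r : ℝ) * g k ^ 2 :=
        sum_le_sum fun k hk => by gcongr; exact (mem_Icc.1 hk).2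
    _ = r * ∑ k ∈ Icc B r, g k ^ 2 := by rw [mul_sum]
    _ ≤ r * ∑' j, g (B + j) ^ 2 := by
        gcongr
        rw [← Ico_add_one_right_eq_Icc, sum_Ico_eq_sum_range]
        exact (hg.comp_injective (add_right_injective B)).sum_le_tsum _ fun _ _ => sq_nonneg _

theorem I21_bound_general
    (f : ℝ → ℝ) (hfmeas : Measurable f)
    (hfeven : ∀ x, f (-x) = f x)
    (M : ℝ) (hfM : ∀ x, |f x| ≤ M) :
    ∃ C : ℝ, C = 16 * Real.pi ^ 2 ∧
      ∀ (g : ℕ → ℝ), Summable (fun k => g k ^ 2) →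
      ∀ B r : ℕ, 1 ≤ B → B ≤ r →
        |∑ k ∈ Finset.Icc B r, ∑ k' ∈ Finset.Icc B r,
          ∑ t ∈ Finset.Icc 1 k, ∑ t' ∈ Finset.Icc 1 k',
            g k * g k'
              * (∫ x in (-Real.pi)..Real.pi, Real.cos (((t : ℤ) - (t' : ℤ)) * x) * f x)
              * (∫ x in (-Real.pi)..Real.pi,
                  Real.cos (((t' : ℤ) - (k' : ℤ) - (t : ℤ) + (k : ℤ)) * x) * f x)|
          ≤ C * M ^ 2 * r * ∑' k : ℕ, g (B + k) ^ 2 := by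
  refine ⟨_, rfl, fun g hg B r _ _ => ?_⟩
  have hfC : IntervalIntegrable (fun x => (f x : ℂ)) volume (-π) π :=
    (intervalIntegrable_const (c := M)).mono_fun (by fun_prop)
      (ae_of_all _ fun x => by simpa using (hfM x).trans (le_abs_self M))
  have hfC_le (x : ℝ) : ‖(f x : ℂ)‖ ≤ M := (norm_real _).trans_le (hfM x)
  have hinj : Set.InjOn (fun p : (_ : ℕ) × ℕ => ((p.2 : ℤ), (p.1 : ℤ) - p.2))
      ((Icc B r).sigma fun k => Icc 1 k) := by
    rintro ⟨k, t⟩ - ⟨k', t'⟩ - h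
    simp only [Prod.mk.injEq] at h
    obtain rfl : t = t' := by omega
    obtain rfl : k = k' := by omega
    rfl
  have hQ := norm_autocovProdForm_le _ (fun p => (g p.1 : ℂ)) _ _ hfC hfC hfC_le hfC_le hinj
  rw [autocovProdForm_sigma_Icc] at hQ
  simp only [autocov_ofReal_eq_integral_cos hfC hfeven, sum_sigma, norm_real, Real.norm_eq_abs,
    sq_abs, sum_const, Nat.card_Icc, add_tsub_cancel_right, nsmul_eq_mul] at hQ
  rw [← Real.norm_eq_abs, ← norm_real]
  push_cast at hQ ⊢
  calc _ ≤ M * M * ((2 * π) ^ 2 * ∑ k ∈ Icc B r, (k : ℝ) * g k ^ 2) := hQ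
    _ ≤ M * M * ((2 * π) ^ 2 * (r * ∑' j, g (B + j) ^ 2)) :=
      mul_le_mul_of_nonneg_left (by gcongr; exact sum_Icc_mul_sq_le_mul_tsum hg B r)
        (mul_self_nonneg M)
    _ ≤ _ := by
      have : 0 ≤ M ^ 2 * r * ∑' j, g (B + j) ^ 2 := by positivity
      nlinarith [Real.pi_pos]

/-- bound on the term `I₂₁` in the proof of Proposition 1.  With
`γ(h) = ∫_{-π}^{π} cos(hλ) f(λ) dλ` for a measurable, `2π`-periodic, even and
bounded `f`, there is an absolute constant `C` (one may take `C = 16π²`) such that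
for all square-summable `(g_k)` and all `1 ≤ B ≤ r`,
`|∑_{k,k'=B}^{r} ∑_{t=1}^{k} ∑_{t'=1}^{k'} g_k g_{k'} γ(t−t') γ(t'−k'−t+k)|
  ≤ C M² r ∑_{k=B}^∞ g_k²`. -/
theorem I21_bound
    (f : ℝ → ℝ) (hfmeas : Measurable f)
    (hfper : ∀ x, f (x + 2 * Real.pi) = f x)
    (hfeven : ∀ x, f (-x) = f x)
    (M : ℝ) (hfM : ∀ x, |f x| ≤ M) :
    ∃ C : ℝ, C = 16 * Real.pi ^ 2 ∧
      ∀ (g : ℕ → ℝ), Summable (fun k => g k ^ 2) →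
      ∀ B r : ℕ, 1 ≤ B → B ≤ r →
        |∑ k ∈ Finset.Icc B r, ∑ k' ∈ Finset.Icc B r,
          ∑ t ∈ Finset.Icc 1 k, ∑ t' ∈ Finset.Icc 1 k',
            g k * g k'
              * (∫ x in (-Real.pi)..Real.pi, Real.cos (((t : ℤ) - (t' : ℤ)) * x) * f x)
              * (∫ x in (-Real.pi)..Real.pi,
                  Real.cos (((t' : ℤ) - (k' : ℤ) - (t : ℤ) + (k : ℤ)) * x) * f x)|
          ≤ C * M ^ 2 * r * ∑' k : ℕ, g (B + k) ^ 2 :=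
  I21_bound_general f hfmeas hfeven M hfM
end
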